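/- arXiv:1205.6169 — 2 statements merged into one kernel-verified Lean document; each statement's English description precedes it below -/
import Mathlib

section
/- Let S be a semigroup that is a finite disjoint union of free monogenic subsemigroups N_a = ⟨a⟩ (a ∈ A). If a^p * b^q = a^r holds in S for some a, b ∈ A and positive integers p, q, r, then p ≤ r. -/
/-- `spow a n` is the `n`-th power of `a` in a semigroup, for `n ≥ 1`
(with the junk value `a` at `n = 0`). -/
def spow {S : Type*} [Semigroup S] (a : S) : ℕ → S
  | 0 => a
  | 1 => a
  | (n + 2) => spow a (n + 1) * a

/-- The subsemigroup (as a set) generated by `a`: all positive powers of `a`. -/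
def Nblock {S : Type*} [Semigroup S] (a : S) : Set S :=
  {x | ∃ i : ℕ, 1 ≤ i ∧ x = spow a i}

private lemma spow_succ' {S : Type*} [Semigroup S] (a : S) (n : ℕ) (hn : 1 ≤ n) :
    spow a (n + 1) = spow a n * a := by
  cases n with
  | zero => omega
  | succ m => rfl

private lemma spow_add' {S : Type*} [Semigroup S] (a : S) (i : ℕ) (hi : 1 ≤ i) :
    ∀ j, 1 ≤ j → spow a (i + j) = spow a i * spow a j := by
  intro j
  induction j with
  | zero => intro h0; exact absurd h0 (by omega)
  | succ m ih =>
    intro _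
    rcases Nat.eq_zero_or_pos m with h0 | hm
    · subst h0
      rw [spow_succ' a i hi]
      rfl
    · rw [show i + (m + 1) = (i + m) + 1 by omega,
        spow_succ' a (i + m) (by omega), ih hm, spow_succ' a m hm, mul_assoc]

theorem stmt1 {S : Type*} [Semigroup S] {A : Type*} [Finite A] (gen : A → S)
    (hcover : ∀ x : S, ∃ a : A, x ∈ Nblock (gen a))
    (hfree : ∀ (a b : A) (i j : ℕ), 1 ≤ i → 1 ≤ j →
      spow (gen a) i = spow (gen b) j → a = b ∧ i = j)
    (a b : A) (p q r : ℕ) (hp : 1 ≤ p) (hq : 1 ≤ q) (hr : 1 ≤ r)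
    (h : spow (gen a) p * spow (gen b) q = spow (gen a) r) :
    p ≤ r := by
  by_contra hpr
  push_neg at hpr
  obtain ⟨d, hd1, hpd⟩ : ∃ d, 1 ≤ d ∧ p = r + d := ⟨p - r, by omega, by omega⟩
  -- Step 1: absorb one b^q
  have h1' : ∀ m : ℕ, spow (gen a) (m + p) * spow (gen b) q = spow (gen a) (m + r) := by
    intro m
    rcases Nat.eq_zero_or_pos m with hm | hm
    · subst hm; simpa using h
    · rw [spow_add' (gen a) m hm p hp, mul_assoc, h, ← spow_add' (gen a) m hm r hr]
  -- Step 2: absorb t+1 copies of b^q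
  have h2' : ∀ t m : ℕ,
      spow (gen a) (m + (t + 1) * p) * spow (gen b) ((t + 1) * q)
        = spow (gen a) (m + (t + 1) * r) := by
    intro t
    induction t with
    | zero => intro m; simpa using h1' m
    | succ s ih =>
      intro m
      have hsq : 1 ≤ (s + 1) * q := Nat.mul_pos (Nat.succ_pos s) hq
      have e1 : spow (gen b) ((s + 1 + 1) * q)
          = spow (gen b) q * spow (gen b) ((s + 1) * q) := by
        rw [show (s + 1 + 1) * q = q + (s + 1) * q by ring,
          spow_add' (gen b) q hq ((s + 1) * q) hsq]
      calc spow (gen a) (m + (s + 1 + 1) * p) * spow (gen b) ((s + 1 + 1) * q)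
          = (spow (gen a) ((m + (s + 1) * p) + p) * spow (gen b) q)
              * spow (gen b) ((s + 1) * q) := by
            rw [e1, show m + (s + 1 + 1) * p = (m + (s + 1) * p) + p by ring, mul_assoc]
        _ = spow (gen a) ((m + r) + (s + 1) * p) * spow (gen b) ((s + 1) * q) := by
            rw [h1' (m + (s + 1) * p),
              show m + (s + 1) * p + r = (m + r) + (s + 1) * p from by ring]
        _ = spow (gen a) (m + (s + 1 + 1) * r) := by
            rw [ih (m + r)]
            congr 1
            ring
  -- Step 3: the elements P k = b^(kq) * a^(kd) satisfy P k * P k' = P k when k'*p ≤ k*d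
  have hPP : ∀ k k' : ℕ, 1 ≤ k' → k' * p ≤ k * d →
      (spow (gen b) (k * q) * spow (gen a) (k * d))
        * (spow (gen b) (k' * q) * spow (gen a) (k' * d))
        = spow (gen b) (k * q) * spow (gen a) (k * d) := by
    intro k k' hk' hle
    obtain ⟨s, rfl⟩ : ∃ s, k' = s + 1 := ⟨k' - 1, by omega⟩
    have hm0 : (k * d - (s + 1) * p) + (s + 1) * p = k * d := Nat.sub_add_cancel hle
    have key : spow (gen a) (k * d) * spow (gen b) ((s + 1) * q)
        = spow (gen a) ((k * d - (s + 1) * p) + (s + 1) * r) := by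
      conv_lhs => rw [← hm0]
      exact h2' s (k * d - (s + 1) * p)
    have hsr : 1 ≤ (k * d - (s + 1) * p) + (s + 1) * r := by
      have : 1 ≤ (s + 1) * r := Nat.mul_pos (Nat.succ_pos s) hr
      omega
    have hsd : 1 ≤ (s + 1) * d := Nat.mul_pos (Nat.succ_pos s) hd1
    have hmulp : (s + 1) * p = (s + 1) * r + (s + 1) * d := by rw [hpd]; ring
    calc (spow (gen b) (k * q) * spow (gen a) (k * d))
          * (spow (gen b) ((s + 1) * q) * spow (gen a) ((s + 1) * d))
        = spow (gen b) (k * q)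
            * ((spow (gen a) (k * d) * spow (gen b) ((s + 1) * q))
              * spow (gen a) ((s + 1) * d)) := by
          rw [mul_assoc, mul_assoc]
      _ = spow (gen b) (k * q)
            * (spow (gen a) ((k * d - (s + 1) * p) + (s + 1) * r)
              * spow (gen a) ((s + 1) * d)) := by rw [key]
      _ = spow (gen b) (k * q) * spow (gen a) (k * d) := by
          rw [← spow_add' (gen a) _ hsr _ hsd]
          congr 2
          omega
  -- Step 4: pigeonhole on blocks of P((p+1)^j)
  have hbl : ∀ j : ℕ, ∃ c : A, ∃ i : ℕ, 1 ≤ i ∧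
      spow (gen b) ((p + 1) ^ j * q) * spow (gen a) ((p + 1) ^ j * d)
        = spow (gen c) i := by
    intro j
    obtain ⟨c, hc⟩ := hcover (spow (gen b) ((p + 1) ^ j * q) * spow (gen a) ((p + 1) ^ j * d))
    obtain ⟨i, hi, he⟩ := hc
    exact ⟨c, i, hi, he⟩
  choose f iexp hie hPe using hbl
  obtain ⟨j, j', hne, hfe⟩ := Finite.exists_ne_map_eq_of_infinite f
  have key : ∀ u v : ℕ, v < u → f u = f v → False := by
    intro u v huv hfuv
    have hle : (p + 1) ^ v * p ≤ (p + 1) ^ u * d := by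
      have h1 : (p + 1) ^ v * p ≤ (p + 1) ^ v * (p + 1) :=
        Nat.mul_le_mul_left _ (by omega)
      have h2 : (p + 1) ^ v * (p + 1) = (p + 1) ^ (v + 1) := (pow_succ (p + 1) v).symm
      have h3 : (p + 1) ^ (v + 1) ≤ (p + 1) ^ u :=
        Nat.pow_le_pow_right (by omega) (by omega)
      have h4 : (p + 1) ^ u ≤ (p + 1) ^ u * d := Nat.le_mul_of_pos_right _ (by omega)
      omega
    have hpp := hPP ((p + 1) ^ u) ((p + 1) ^ v) (Nat.one_le_pow _ _ (by omega)) hle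
    rw [hPe u, hPe v, hfuv] at hpp
    rw [← spow_add' (gen (f v)) (iexp u) (hie u) (iexp v) (hie v)] at hpp
    have := (hfree (f v) (f v) _ _ (le_trans (hie u) (Nat.le_add_right _ _))
      (hie u) hpp).2
    have hv := hie v
    omega
  rcases lt_or_gt_of_ne hne with hlt | hlt
  · exact key j' j hlt hfe.symm
  · exact key j j' hlt hfe
end

section
/- Let S be a semigroup that is a finite disjoint union of free monogenic subsemigroups N_a = ⟨a⟩ (a ∈ A). Fix a, b ∈ A and x ∈ S, and let T = { y ∈ N_a : y·x ∈ N_b }. Then either the image set T·x = { y·x : y ∈ T } has at most one element, or the map y ↦ y·x is injective on T. -/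
/-- `Tset a x b = { y ∈ N_a : y * x ∈ N_b }`. -/
def Tset {S : Type*} [Semigroup S] (a x b : S) : Set S :=
  {y | y ∈ Nblock a ∧ y * x ∈ Nblock b}

theorem spow_add {S : Type*} [Semigroup S] (a : S) (m n : ℕ) (hm : 1 ≤ m) (hn : 1 ≤ n) :
    spow a (m + n) = spow a m * spow a n := by
  induction n with
  | zero => omega
  | succ n ih =>
    rcases Nat.eq_or_lt_of_le hn with h | h
    · have hn0 : n = 0 := by omega
      subst hn0
      obtain ⟨m', rfl⟩ : ∃ m', m = m' + 1 := ⟨m - 1, by omega⟩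
      show spow a (m' + 2) = spow a (m' + 1) * spow a 1
      rfl
    · have hn' : 1 ≤ n := by omega
      have ihn := ih hn'
      calc spow a (m + (n + 1)) = spow a (m + n) * a := by
              obtain ⟨c, hc⟩ : ∃ c, m + n = c + 1 := ⟨m + n - 1, by omega⟩
              rw [show m + (n + 1) = c + 2 by omega, hc]
              rfl
        _ = (spow a m * spow a n) * a := by rw [ihn]
        _ = spow a m * (spow a n * a) := mul_assoc _ _ _
        _ = spow a m * spow a (n + 1) := by
              obtain ⟨c, hc⟩ : ∃ c, n = c + 1 := ⟨n - 1, by omega⟩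
              rw [hc]
              rfl

theorem iterlem {S : Type*} [Semigroup S] (a b : S) (U P Q : ℕ) (hU : 1 ≤ U) (hP : 1 ≤ P)
    (hQ : 1 ≤ Q)
    (h : ∀ t : ℕ, spow a U * spow b (P + t) = spow b (Q + t)) :
    ∀ s t : ℕ, spow a (U * (s + 1)) * spow b (P * (s + 1) + t) = spow b (Q * (s + 1) + t) := by
  intro s
  induction s with
  | zero => intro t; simpa using h t
  | succ s ih =>
    intro t
    have hU1 : 1 ≤ U * (s + 1) := Nat.one_le_iff_ne_zero.2 (Nat.mul_ne_zero (by omega) (by omega))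
    have e1 : U * (s + 2) = U * (s + 1) + U := by ring
    have e2 : P * (s + 2) + t = P + (P * (s + 1) + t) := by ring
    rw [e1, e2, spow_add a _ _ hU1 hU, mul_assoc, h, show Q + (P * (s + 1) + t)
      = P * (s + 1) + (Q + t) by ring, ih, show Q * (s + 1) + (Q + t) = Q * (s + 2) + t by ring]

theorem keylem {S : Type*} [Semigroup S] (a b x : S)
    (hfb : ∀ i j : ℕ, 1 ≤ i → 1 ≤ j → spow b i = spow b j → i = j)
    (i j k p q : ℕ) (hi : 1 ≤ i) (hk : 1 ≤ k) (hp : 1 ≤ p) (hq : 1 ≤ q) (hij : i < j)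
    (h1 : spow a i * x = spow b p) (h2 : spow a j * x = spow b p)
    (h3 : spow a k * x = spow b q) : q = p := by
  set D := j - i with hDdef
  have hD : 1 ≤ D := by omega
  have hD0 : spow a D * spow b p = spow b p := by
    rw [← h1, ← mul_assoc, ← spow_add a D i hD hi, show D + i = j by omega, h2, h1]
  have hDt : ∀ t : ℕ, spow a D * spow b (p + t) = spow b (p + t) := by
    intro t
    rcases Nat.eq_zero_or_pos t with rfl | ht
    · simpa using hD0
    · rw [spow_add b p t hp ht, ← mul_assoc, hD0]
  rcases lt_trichotomy k i with hki | hki | hki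
  · -- k < i : shift relation from b^q to b^p
    set K := i - k with hKdef
    have hK : 1 ≤ K := by omega
    have hK0 : spow a K * spow b q = spow b p := by
      rw [← h3, ← mul_assoc, ← spow_add a K k hK hk, show K + k = i by omega, h1]
    have hKt : ∀ t : ℕ, spow a K * spow b (q + t) = spow b (p + t) := by
      intro t
      rcases Nat.eq_zero_or_pos t with rfl | ht
      · simpa using hK0
      · rw [spow_add b q t hq ht, spow_add b p t hp ht, ← mul_assoc, hK0]
    have A := iterlem a b K q p hK hq hp hKt (D - 1) (p * K)
    have B := iterlem a b D p p hD hp hp hDt (K - 1) (q * D)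
    rw [show D - 1 + 1 = D by omega] at A
    rw [show K - 1 + 1 = K by omega] at B
    -- A : spow a (K * D) * spow b (q * D + p * K) = spow b (p * D + p * K)
    -- B : spow a (D * K) * spow b (p * K + q * D) = spow b (p * K + q * D)
    have hsame : spow b (p * D + p * K) = spow b (p * K + q * D) := by
      rw [← A, ← B, show K * D = D * K by ring, show q * D + p * K = p * K + q * D by ring]
    have m1 : 0 < p * D := Nat.mul_pos hp hD
    have m2 : 0 < p * K := Nat.mul_pos hp hK
    have m3 : 0 < q * D := Nat.mul_pos hq hD
    have := hfb _ _ (by omega) (by omega) hsame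
    have : p * D = q * D := by omega
    exact (Nat.eq_of_mul_eq_mul_right (by omega) this).symm
  · -- k = i
    subst hki
    exact hfb q p hq hp (by rw [← h3, h1])
  · -- k > i : shift relation from b^p to b^q
    set K := k - i with hKdef
    have hK : 1 ≤ K := by omega
    have hK0 : spow a K * spow b p = spow b q := by
      rw [← h1, ← mul_assoc, ← spow_add a K i hK hi, show K + i = k by omega, h3]
    have hKt : ∀ t : ℕ, spow a K * spow b (p + t) = spow b (q + t) := by
      intro t
      rcases Nat.eq_zero_or_pos t with rfl | ht
      · simpa using hK0
      · rw [spow_add b p t hp ht, spow_add b q t hq ht, ← mul_assoc, hK0]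
    have A := iterlem a b K p q hK hp hq hKt (D - 1) (p * K)
    have B := iterlem a b D p p hD hp hp hDt (K - 1) (p * D)
    rw [show D - 1 + 1 = D by omega] at A
    rw [show K - 1 + 1 = K by omega] at B
    -- A : spow a (K * D) * spow b (p * D + p * K) = spow b (q * D + p * K)
    -- B : spow a (D * K) * spow b (p * K + p * D) = spow b (p * K + p * D)
    have hsame : spow b (q * D + p * K) = spow b (p * K + p * D) := by
      rw [← A, ← B, show K * D = D * K by ring, show p * D + p * K = p * K + p * D by ring]
    have m1 : 0 < p * D := Nat.mul_pos hp hD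
    have m2 : 0 < p * K := Nat.mul_pos hp hK
    have m3 : 0 < q * D := Nat.mul_pos hq hD
    have := hfb _ _ (by omega) (by omega) hsame
    have : q * D = p * D := by omega
    exact Nat.eq_of_mul_eq_mul_right (by omega) this

theorem stmt6 {S : Type*} [Semigroup S] {A : Type*} [Finite A] (gen : A → S)
    (hcover : ∀ x : S, ∃ a : A, x ∈ Nblock (gen a))
    (hfree : ∀ (a b : A) (i j : ℕ), 1 ≤ i → 1 ≤ j →
      spow (gen a) i = spow (gen b) j → a = b ∧ i = j)
    (a b : A) (x : S) :
    ((fun y => y * x) '' Tset (gen a) x (gen b)).Subsingleton ∨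
      Set.InjOn (fun y => y * x) (Tset (gen a) x (gen b)) := by
  by_cases H : Set.InjOn (fun y => y * x) (Tset (gen a) x (gen b))
  · exact Or.inr H
  left
  have hfb : ∀ i j : ℕ, 1 ≤ i → 1 ≤ j → spow (gen b) i = spow (gen b) j → i = j :=
    fun i j hi hj h => (hfree b b i j hi hj h).2
  rw [Set.InjOn] at H
  push_neg at H
  obtain ⟨y1, hy1, y2, hy2, heq, hne⟩ := H
  obtain ⟨⟨i, hi, rfl⟩, ⟨p, hp, hbp⟩⟩ := hy1
  obtain ⟨⟨j, hj, rfl⟩, ⟨p', hp', hbp'⟩⟩ := hy2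
  have heq' : spow (gen a) i * x = spow (gen a) j * x := heq
  have hij : i ≠ j := by
    intro h; exact hne (by rw [h])
  have h2 : spow (gen a) j * x = spow (gen b) p := by rw [← heq', hbp]
  -- now show the image is a subsingleton: every element equals spow (gen b) p
  have main : ∀ z ∈ (fun y => y * x) '' Tset (gen a) x (gen b), z = spow (gen b) p := by
    rintro z ⟨u, ⟨⟨k, hk, rfl⟩, ⟨r, hr, hbr⟩⟩, rfl⟩
    show spow (gen a) k * x = spow (gen b) p
    rcases Nat.lt_or_ge i j with hlt | hge
    · have := keylem (gen a) (gen b) x hfb i j k p r hi hk hp hr hlt hbp h2 hbr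
      rw [hbr, this]
    · have hlt : j < i := by omega
      have := keylem (gen a) (gen b) x hfb j i k p r hj hk hp hr hlt h2 hbp hbr
      rw [hbr, this]
  intro z1 hz1 z2 hz2
  rw [main z1 hz1, main z2 hz2]
end
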